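/- arXiv:1308.2043 — 3 statements merged into one kernel-verified Lean document; each statement's English description precedes it below -/
import Mathlib

section
/- Let g be a smooth real-valued function on ℂ that is nowhere zero and strictly positive, satisfying g·∂²g/∂w∂w̄ = |∂g/∂w|² on all of ℂ, and such that w ↦ w·w̄·g(1/w) extends to a smooth function at 0. Then g is constant. -/
open Complex Metric MeasureTheory intervalIntegral


/-- Wirtinger derivative ∂/∂w of a function on ℂ. -/
noncomputable def wd (f : ℂ → ℂ) (w : ℂ) : ℂ :=
  (fderiv ℝ f w 1 - Complex.I * fderiv ℝ f w Complex.I) / 2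

/-- Wirtinger derivative ∂/∂w̄ of a function on ℂ. -/
noncomputable def wdb (f : ℂ → ℂ) (w : ℂ) : ℂ :=
  (fderiv ℝ f w 1 + Complex.I * fderiv ℝ f w Complex.I) / 2

lemma clm_basis (L : ℂ →L[ℝ] ℂ) (v : ℂ) :
    L v = (v.re : ℂ) * L 1 + (v.im : ℂ) * L Complex.I := by
  have hv : v = v.re • (1:ℂ) + v.im • Complex.I := by
    simp [Complex.real_smul, Complex.re_add_im]
  calc L v = L (v.re • (1:ℂ) + v.im • Complex.I) := by rw [← hv]
  _ = v.re • L 1 + v.im • L Complex.I := by rw [map_add, _root_.map_smul, _root_.map_smul]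
  _ = (v.re : ℂ) * L 1 + (v.im : ℂ) * L Complex.I := by
      simp [Complex.real_smul]

lemma clm_basis' (L : ℂ →L[ℝ] ℂ) (v : ℂ) :
    L v = ((L 1 - Complex.I * L Complex.I)/2) * v
      + ((L 1 + Complex.I * L Complex.I)/2) * (starRingEnd ℂ) v := by
  rw [clm_basis L v]
  have hconjv : (starRingEnd ℂ) v = (v.re:ℂ) - (v.im:ℂ)*Complex.I := by
    simp [Complex.ext_iff]
  rw [hconjv]
  nth_rewrite 3 [← Complex.re_add_im v]
  linear_combination ((v.im:ℂ) * L Complex.I) * Complex.I_sq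

lemma cr_diffAt {f : ℂ → ℂ} {z : ℂ} (hf : DifferentiableAt ℝ f z)
    (hcr : fderiv ℝ f z Complex.I = Complex.I * fderiv ℝ f z 1) :
    DifferentiableAt ℂ f z := by
  set L := fderiv ℝ f z with hL
  let M : ℂ →L[ℂ] ℂ := (L 1) • (ContinuousLinearMap.id ℂ ℂ)
  have hM : HasFDerivAt f (M.restrictScalars ℝ) z := by
    have hLd : HasFDerivAt f L z := hf.hasFDerivAt
    have : (M.restrictScalars ℝ : ℂ →L[ℝ] ℂ) = L := by
      apply ContinuousLinearMap.ext
      intro v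
      rw [clm_basis L v]
      simp only [ContinuousLinearMap.coe_restrictScalars', ContinuousLinearMap.smul_apply,
        ContinuousLinearMap.id_apply, smul_eq_mul, M]
      rw [hcr]
      nth_rewrite 1 [← Complex.re_add_im v]
      ring
    rw [this]; exact hLd
  exact ⟨M, hasFDerivAt_of_restrictScalars (𝕜 := ℝ) hM rfl⟩


lemma exists_primitive {h : ℂ → ℂ} (hd : Differentiable ℂ h) :
    ∃ F : ℂ → ℂ, ∀ z, HasDerivAt F (h z) z := by
  have han : AnalyticOnNhd ℂ h Set.univ := by
    rw [analyticOnNhd_univ_iff_differentiable]; exact hd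
  have hd' : Differentiable ℂ (deriv h) := by
    intro z; exact ((han.deriv z trivial).differentiableAt)
  have hc : Continuous h := hd.continuous
  have hc' : Continuous (deriv h) := hd'.continuous
  refine ⟨fun z => ∫ t in (0:ℝ)..1, z * h ((t:ℂ) * z), fun z₀ => ?_⟩
  obtain ⟨M₁, hM₁⟩ := (isCompact_closedBall (0:ℂ) (‖z₀‖+1)).exists_bound_of_continuousOn
      hc.continuousOn
  obtain ⟨M₂, hM₂⟩ := (isCompact_closedBall (0:ℂ) (‖z₀‖+1)).exists_bound_of_continuousOn
      hc'.continuousOn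
  have h0M₂ : 0 ≤ M₂ := (norm_nonneg _).trans (hM₂ 0 (by simp; positivity))
  have key : HasDerivAt (fun z => ∫ t in (0:ℝ)..1, z * h ((t:ℂ) * z))
      (∫ t in (0:ℝ)..1, (h ((t:ℂ) * z₀) + z₀ * ((t:ℂ) * deriv h ((t:ℂ) * z₀)))) z₀ := by
    refine (intervalIntegral.hasDerivAt_integral_of_dominated_loc_of_deriv_le
      (F := fun z t => z * h ((t:ℂ)*z))
      (F' := fun z t => h ((t:ℂ) * z) + z * ((t:ℂ) * deriv h ((t:ℂ) * z)))
      (bound := fun _ => M₁ + (‖z₀‖+1) * M₂) (ball_mem_nhds z₀ one_pos) ?_ ?_ ?_ ?_ ?_ ?_).2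
    · filter_upwards with z
      exact ((continuous_const.mul (hc.comp (by continuity))).aestronglyMeasurable).restrict
    · exact (Continuous.intervalIntegrable (by continuity) 0 1)
    · have c0 : Continuous fun t:ℝ => (t:ℂ) * z₀ := Complex.continuous_ofReal.mul continuous_const
      have : Continuous fun t : ℝ => h ((t:ℂ) * z₀) + z₀ * ((t:ℂ) * deriv h ((t:ℂ) * z₀)) :=
        (hc.comp c0).add (continuous_const.mul
          (Complex.continuous_ofReal.mul (hc'.comp c0)))
      exact this.aestronglyMeasurable.restrict
    · filter_upwards with t ht z hz
      rw [Set.uIoc_of_le (zero_le_one : (0:ℝ) ≤ 1)] at ht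
      have htabs : |t| ≤ 1 := by rw [abs_of_pos ht.1]; exact ht.2
      have hzb : ‖z‖ ≤ ‖z₀‖ + 1 := by
        have h1 := (mem_ball_iff_norm.1 hz).le
        calc ‖z‖ = ‖z₀ + (z - z₀)‖ := by ring_nf
        _ ≤ ‖z₀‖ + ‖z - z₀‖ := norm_add_le _ _
        _ ≤ ‖z₀‖ + 1 := by linarith
      have htz : (t:ℂ) * z ∈ closedBall (0:ℂ) (‖z₀‖+1) := by
        simp only [mem_closedBall, dist_zero_right, norm_mul, Complex.norm_real,
          Real.norm_eq_abs]
        calc |t| * ‖z‖ ≤ 1 * (‖z₀‖+1) :=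
          mul_le_mul htabs hzb (norm_nonneg _) zero_le_one
        _ = ‖z₀‖ + 1 := one_mul _
      have e2 : ‖z * ((t:ℂ) * deriv h ((t:ℂ) * z))‖ = ‖z‖ * (|t| * ‖deriv h ((t:ℂ)*z)‖) := by
        simp [norm_mul, Complex.norm_real, Real.norm_eq_abs]
      calc ‖h ((t:ℂ) * z) + z * ((t:ℂ) * deriv h ((t:ℂ) * z))‖
          ≤ ‖h ((t:ℂ)*z)‖ + ‖z * ((t:ℂ) * deriv h ((t:ℂ) * z))‖ := norm_add_le _ _
        _ ≤ M₁ + (‖z₀‖+1) * M₂ := by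
            refine add_le_add (hM₁ _ htz) ?_
            rw [e2]
            calc ‖z‖ * (|t| * ‖deriv h ((t:ℂ)*z)‖) ≤ (‖z₀‖+1) * (1 * M₂) := by
                  apply mul_le_mul hzb _ (by positivity) (by positivity)
                  exact mul_le_mul htabs (hM₂ _ htz) (norm_nonneg _) zero_le_one
            _ = (‖z₀‖+1) * M₂ := by ring
    · exact intervalIntegrable_const
    · filter_upwards with t ht z hz
      have hinner : HasDerivAt (fun z : ℂ => h ((t:ℂ)*z)) (deriv h ((t:ℂ)*z) * (t:ℂ)) z := by
        have h1 : HasDerivAt (fun z : ℂ => (t:ℂ)*z) (t:ℂ) z := by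
          simpa using (hasDerivAt_id z).const_mul (t:ℂ)
        have h2 : HasDerivAt h (deriv h ((t:ℂ)*z)) ((t:ℂ)*z) := (hd _).hasDerivAt
        exact h2.comp z h1
      have h5 := (hasDerivAt_id z).mul hinner
      have e5 : h ((t:ℂ) * z) + z * ((t:ℂ) * deriv h ((t:ℂ) * z))
          = 1 * h ((t:ℂ)*z) + z * (deriv h ((t:ℂ)*z) * (t:ℂ)) := by ring
      rw [e5]
      exact h5
  have ftc : (∫ t in (0:ℝ)..1, (h ((t:ℂ) * z₀) + z₀ * ((t:ℂ) * deriv h ((t:ℂ) * z₀)))) = h z₀ := by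
    have hψ : ∀ t ∈ Set.uIcc (0:ℝ) 1, HasDerivAt (fun t : ℝ => (t:ℂ) * h ((t:ℂ)*z₀))
        (h ((t:ℂ) * z₀) + z₀ * ((t:ℂ) * deriv h ((t:ℂ) * z₀))) t := by
      intro t _
      have h1 : HasDerivAt (fun t : ℝ => (t:ℂ)) 1 t := by
        simpa using (hasDerivAt_id t).ofReal_comp
      have h1' : HasDerivAt (fun t : ℝ => (t:ℂ)*z₀) z₀ t := by
        simpa using h1.mul_const z₀
      have h2 : HasDerivAt h (deriv h ((t:ℂ)*z₀)) ((t:ℂ)*z₀) := (hd _).hasDerivAt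
      have h3 : HasDerivAt (fun t : ℝ => h ((t:ℂ)*z₀)) (deriv h ((t:ℂ)*z₀) * z₀) t :=
        h2.comp t h1'
      have h4 := h1.mul h3
      have e4 : h ((t:ℂ) * z₀) + z₀ * ((t:ℂ) * deriv h ((t:ℂ) * z₀))
          = 1 * h ((t:ℂ)*z₀) + (t:ℂ) * (deriv h ((t:ℂ)*z₀) * z₀) := by ring
      rw [e4]
      exact h4
    have hcont : IntervalIntegrable
        (fun t : ℝ => (h ((t:ℂ) * z₀) + z₀ * ((t:ℂ) * deriv h ((t:ℂ) * z₀)))) volume 0 1 :=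
      by
        have c0 : Continuous fun t:ℝ => (t:ℂ) * z₀ := Complex.continuous_ofReal.mul continuous_const
        exact Continuous.intervalIntegrable ((hc.comp c0).add (continuous_const.mul
          (Complex.continuous_ofReal.mul (hc'.comp c0)))) 0 1
    have := intervalIntegral.integral_eq_sub_of_hasDerivAt hψ hcont
    rw [this]; simp
  rw [ftc] at key
  exact key

lemma linear_growth_const {φ : ℂ → ℂ} (hφ : Differentiable ℂ φ) {A : ℝ}
    (hA : ∀ z, ‖φ z‖ ≤ A + A * ‖z‖) (h0 : ∀ z, φ z ≠ 0) : ∀ z, φ z = φ 0 := by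
  have hA0 : 0 ≤ A := by
    have := (norm_nonneg (φ 0)).trans (hA 0)
    simpa using this
  -- bound the derivative
  have hder : ∀ z, ‖deriv φ z‖ ≤ A := by
    intro z
    have key : ∀ R : ℝ, 1 ≤ R → ‖deriv φ z‖ ≤ (A + A * ‖z‖ + A * R) / R := by
      intro R hR
      have hRpos : (0:ℝ) < R := lt_of_lt_of_le one_pos hR
      have := Complex.norm_deriv_le_of_forall_mem_sphere_norm_le (c := z) hRpos
        (hφ.diffContOnCl) (C := A + A * ‖z‖ + A * R) ?_
      · exact this.trans (by apply le_of_eq; ring_nf)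
      · intro w hw
        have hwz : ‖w - z‖ = R := by simpa [dist_eq_norm] using mem_sphere_iff_norm.1 hw
        have : ‖w‖ ≤ ‖z‖ + R := by
          calc ‖w‖ = ‖z + (w - z)‖ := by ring_nf
          _ ≤ ‖z‖ + ‖w - z‖ := norm_add_le _ _
          _ = ‖z‖ + R := by rw [hwz]
        calc ‖φ w‖ ≤ A + A * ‖w‖ := hA w
        _ ≤ A + A * (‖z‖ + R) := by nlinarith
        _ = A + A * ‖z‖ + A * R := by ring
    have hlim : Filter.Tendsto (fun R : ℝ => (A + A * ‖z‖ + A * R) / R)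
        Filter.atTop (nhds A) := by
      have h1 : (fun R : ℝ => (A + A * ‖z‖ + A * R) / R) =ᶠ[Filter.atTop]
          (fun R : ℝ => (A + A * ‖z‖) / R + A) := by
        filter_upwards [Filter.eventually_gt_atTop (0:ℝ)] with R hR
        field_simp
      rw [Filter.tendsto_congr' h1]
      have h2 : Filter.Tendsto (fun R : ℝ => (A + A * ‖z‖) / R) Filter.atTop (nhds 0) :=
        tendsto_const_nhds.div_atTop Filter.tendsto_id
      simpa using h2.add tendsto_const_nhds
    exact ge_of_tendsto hlim (Filter.eventually_atTop.2 ⟨1, key⟩)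
  -- deriv φ is a bounded entire function, hence constant
  have hdd : Differentiable ℂ (deriv φ) := by
    have han : AnalyticOnNhd ℂ φ Set.univ := by
      rw [analyticOnNhd_univ_iff_differentiable]; exact hφ
    exact fun z => (han.deriv z trivial).differentiableAt
  obtain ⟨c, hc⟩ := hdd.exists_const_forall_eq_of_bounded
    (isBounded_iff_forall_norm_le.2 ⟨A, by rintro x ⟨z, rfl⟩; exact hder z⟩)
  -- φ z = φ 0 + c z
  have haff : ∀ z, φ z - c * z = φ 0 := by
    intro z
    have hη : Differentiable ℂ (fun z => φ z - c * z) :=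
      hφ.sub (differentiable_id.const_mul c)
    have hη' : ∀ x, deriv (fun z => φ z - c * z) x = 0 := by
      intro x
      have h1 : HasDerivAt (fun z => φ z - c * z) (deriv φ x - c) x :=
        (hφ x).hasDerivAt.sub (by simpa using (hasDerivAt_id x).const_mul c)
      rw [h1.deriv, ← hc x, sub_self]
    have := is_const_of_deriv_eq_zero hη hη' z 0
    simpa using this
  -- c must be 0 since φ never vanishes
  rcases eq_or_ne c 0 with rfl | hcne
  · intro z
    have := haff z
    simpa using this
  · exfalso
    apply h0 (-(φ 0) / c)
    have h8 := haff (-(φ 0) / c)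
    rw [mul_div_cancel₀ _ hcne] at h8
    linear_combination h8

set_option maxHeartbeats 2000000 in
theorem stmt1 (g : ℂ → ℂ)
    (hg : ContDiff ℝ (⊤ : ℕ∞) g)
    (hgreal : ∀ w, (g w).im = 0)
    (hgpos : ∀ w, 0 < (g w).re)
    (heq : ∀ w, g w * wd (wdb g) w = (((‖wd g w‖) ^ 2 : ℝ) : ℂ))
    (hgrow : ∃ G : ℂ → ℂ, ContDiff ℝ (⊤ : ℕ∞) G ∧
      ∀ w : ℂ, w ≠ 0 → G w = w * (starRingEnd ℂ) w * g w⁻¹) :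
    ∃ c : ℂ, ∀ w, g w = c := by
  have hgd : Differentiable ℝ g := hg.differentiable (by simp)
  have hgne : ∀ w, g w ≠ 0 := by
    intro w h0
    have := hgpos w; rw [h0] at this; simp at this
  -- imaginary part of all directional derivatives vanishes
  have him : ∀ w v, (fderiv ℝ g w v).im = 0 := by
    intro w v
    have h2 : HasFDerivAt (fun w => Complex.imCLM (g w))
        (Complex.imCLM.comp (fderiv ℝ g w)) w :=
      Complex.imCLM.hasFDerivAt.comp w (hgd w).hasFDerivAt
    have h1 : (fun w => Complex.imCLM (g w)) = fun _ : ℂ => (0:ℝ) := by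
      funext u; simpa using hgreal u
    rw [h1] at h2
    have h3 : Complex.imCLM.comp (fderiv ℝ g w) = 0 := h2.unique (hasFDerivAt_const 0 w)
    have := ContinuousLinearMap.ext_iff.1 h3 v
    simpa using this
  -- smoothness of the derivative
  have hg' : ContDiff ℝ (⊤ : ℕ∞) (fderiv ℝ g) := hg.fderiv_right (by simp)
  have hP : ContDiff ℝ (⊤ : ℕ∞) (fun w => fderiv ℝ g w 1) := hg'.clm_apply contDiff_const
  have hQ : ContDiff ℝ (⊤ : ℕ∞) (fun w => fderiv ℝ g w Complex.I) := hg'.clm_apply contDiff_const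
  -- second derivative and symmetry
  have hg''fd : ∀ w, HasFDerivAt (fderiv ℝ g) (fderiv ℝ (fderiv ℝ g) w) w :=
    fun w => ((hg'.differentiable (by simp)) w).hasFDerivAt
  have hsym : ∀ w v u, fderiv ℝ (fderiv ℝ g) w v u = fderiv ℝ (fderiv ℝ g) w u v :=
    fun w v u => second_derivative_symmetric (fun y => (hgd y).hasFDerivAt) (hg''fd w) v u
  have hdP : ∀ w v, fderiv ℝ (fun u => fderiv ℝ g u 1) w v = fderiv ℝ (fderiv ℝ g) w v 1 := by
    intro w v
    have h2 : HasFDerivAt (fun u => fderiv ℝ g u 1)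
        ((ContinuousLinearMap.apply ℝ ℂ (1:ℂ)).comp (fderiv ℝ (fderiv ℝ g) w)) w :=
      (ContinuousLinearMap.apply ℝ ℂ (1:ℂ)).hasFDerivAt.comp w (hg''fd w)
    rw [h2.fderiv]; simp
  have hdQ : ∀ w v, fderiv ℝ (fun u => fderiv ℝ g u Complex.I) w v
      = fderiv ℝ (fderiv ℝ g) w v Complex.I := by
    intro w v
    have h2 : HasFDerivAt (fun u => fderiv ℝ g u Complex.I)
        ((ContinuousLinearMap.apply ℝ ℂ (Complex.I)).comp (fderiv ℝ (fderiv ℝ g) w)) w :=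
      (ContinuousLinearMap.apply ℝ ℂ (Complex.I)).hasFDerivAt.comp w (hg''fd w)
    rw [h2.fderiv]; simp
  -- reality
  have hPreal : ∀ w, (starRingEnd ℂ) (fderiv ℝ g w 1) = fderiv ℝ g w 1 :=
    fun w => Complex.conj_eq_iff_im.2 (him w 1)
  have hQreal : ∀ w, (starRingEnd ℂ) (fderiv ℝ g w Complex.I) = fderiv ℝ g w Complex.I :=
    fun w => Complex.conj_eq_iff_im.2 (him w Complex.I)
  have hgconj : ∀ w, (starRingEnd ℂ) (g w) = g w :=
    fun w => Complex.conj_eq_iff_im.2 (hgreal w)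
  have hwdb_conj : ∀ w, wdb g w = (starRingEnd ℂ) (wd g w) := by
    intro w
    unfold wd wdb
    rw [map_div₀, map_sub, map_mul, Complex.conj_I, hPreal, hQreal, map_ofNat]
    ring
  have heq' : ∀ w, g w * wd (wdb g) w = wd g w * wdb g w := by
    intro w
    rw [heq w, hwdb_conj w, Complex.mul_conj]
    norm_cast
    exact Complex.sq_norm _
  -- derivative of wd g and wdb g
  have hwdg_eq : wd g = fun w => (2:ℂ)⁻¹ * (fderiv ℝ g w 1 - Complex.I * fderiv ℝ g w Complex.I) := by
    funext w; unfold wd; ring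
  have hwdbg_eq : wdb g = fun w => (2:ℂ)⁻¹ * (fderiv ℝ g w 1 + Complex.I * fderiv ℝ g w Complex.I) := by
    funext w; unfold wdb; ring
  have hwdg_fd : ∀ w, HasFDerivAt (wd g)
      ((2:ℂ)⁻¹ • (((ContinuousLinearMap.apply ℝ ℂ (1:ℂ)).comp (fderiv ℝ (fderiv ℝ g) w))
        - Complex.I • ((ContinuousLinearMap.apply ℝ ℂ Complex.I).comp (fderiv ℝ (fderiv ℝ g) w)))) w := by
    intro w
    rw [hwdg_eq]
    exact (((ContinuousLinearMap.apply ℝ ℂ (1:ℂ)).hasFDerivAt.comp w (hg''fd w)).sub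
      ((((ContinuousLinearMap.apply ℝ ℂ Complex.I)).hasFDerivAt.comp w (hg''fd w)).const_mul
        Complex.I)).const_mul (2:ℂ)⁻¹
  have hwdbg_fd : ∀ w, HasFDerivAt (wdb g)
      ((2:ℂ)⁻¹ • (((ContinuousLinearMap.apply ℝ ℂ (1:ℂ)).comp (fderiv ℝ (fderiv ℝ g) w))
        + Complex.I • ((ContinuousLinearMap.apply ℝ ℂ Complex.I).comp (fderiv ℝ (fderiv ℝ g) w)))) w := by
    intro w
    rw [hwdbg_eq]
    exact (((ContinuousLinearMap.apply ℝ ℂ (1:ℂ)).hasFDerivAt.comp w (hg''fd w)).add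
      ((((ContinuousLinearMap.apply ℝ ℂ Complex.I)).hasFDerivAt.comp w (hg''fd w)).const_mul
        Complex.I)).const_mul (2:ℂ)⁻¹
  have hwdg_app : ∀ w v, fderiv ℝ (wd g) w v
      = (2:ℂ)⁻¹ * (fderiv ℝ (fderiv ℝ g) w v 1
        - Complex.I * fderiv ℝ (fderiv ℝ g) w v Complex.I) := by
    intro w v; rw [(hwdg_fd w).fderiv]
    simp [ContinuousLinearMap.smul_apply, ContinuousLinearMap.sub_apply,
      ContinuousLinearMap.comp_apply, smul_eq_mul]
  have hwdbg_app : ∀ w v, fderiv ℝ (wdb g) w v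
      = (2:ℂ)⁻¹ * (fderiv ℝ (fderiv ℝ g) w v 1
        + Complex.I * fderiv ℝ (fderiv ℝ g) w v Complex.I) := by
    intro w v; rw [(hwdbg_fd w).fderiv]
    simp [ContinuousLinearMap.smul_apply, ContinuousLinearMap.add_apply,
      ContinuousLinearMap.comp_apply, smul_eq_mul]
    ring
  -- the logarithmic derivative
  set hf : ℂ → ℂ := fun w => wd g w * (g w)⁻¹ with hfdef
  have hinvfd : ∀ w, HasFDerivAt (fun u => (g u)⁻¹)
      ((-ContinuousLinearMap.mulLeftRight ℝ ℂ (g w)⁻¹ (g w)⁻¹).comp (fderiv ℝ g w)) w :=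
    fun w => (hasFDerivAt_inv' (hgne w)).comp w (hgd w).hasFDerivAt
  have hffd : ∀ w, HasFDerivAt hf
      (wd g w • ((-ContinuousLinearMap.mulLeftRight ℝ ℂ (g w)⁻¹ (g w)⁻¹).comp (fderiv ℝ g w))
        + (g w)⁻¹ • ((2:ℂ)⁻¹ • (((ContinuousLinearMap.apply ℝ ℂ (1:ℂ)).comp (fderiv ℝ (fderiv ℝ g) w))
        - Complex.I • ((ContinuousLinearMap.apply ℝ ℂ Complex.I).comp (fderiv ℝ (fderiv ℝ g) w))))) w :=
    fun w => (hwdg_fd w).mul (hinvfd w)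
  have hf_app : ∀ w v, fderiv ℝ hf w v
      = wd g w * (-((g w)⁻¹ * fderiv ℝ g w v * (g w)⁻¹))
        + (g w)⁻¹ * ((2:ℂ)⁻¹ * (fderiv ℝ (fderiv ℝ g) w v 1
          - Complex.I * fderiv ℝ (fderiv ℝ g) w v Complex.I)) := by
    intro w v; rw [(hffd w).fderiv]
    simp [ContinuousLinearMap.smul_apply, ContinuousLinearMap.add_apply,
      ContinuousLinearMap.sub_apply, ContinuousLinearMap.comp_apply,
      ContinuousLinearMap.neg_apply, ContinuousLinearMap.mulLeftRight_apply, smul_eq_mul]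
    try ring
  -- key identity in cleared form
  have hkey2 : ∀ w, g w * (fderiv ℝ (fderiv ℝ g) w 1 1 + fderiv ℝ (fderiv ℝ g) w Complex.I Complex.I)
      = 4 * (wd g w * wdb g w) := by
    intro w
    have hkey := heq' w
    have hwdwdb : wd (wdb g) w = (fderiv ℝ (wdb g) w 1 - Complex.I * fderiv ℝ (wdb g) w Complex.I)/2 := rfl
    rw [hwdwdb, hwdbg_app w 1, hwdbg_app w Complex.I, hsym w Complex.I 1] at hkey
    linear_combination (norm := ring_nf) 4 * hkey + (g w * fderiv ℝ (fderiv ℝ g) w Complex.I Complex.I) * Complex.I_sq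
  -- Cauchy-Riemann for hf
  have hCR : ∀ w, fderiv ℝ hf w Complex.I = Complex.I * fderiv ℝ hf w 1 := by
    intro w
    rw [hf_app w Complex.I, hf_app w 1]
    have hwd_def : wd g w = (fderiv ℝ g w 1 - Complex.I * fderiv ℝ g w Complex.I)/2 := rfl
    have hwdb_def : wdb g w = (fderiv ℝ g w 1 + Complex.I * fderiv ℝ g w Complex.I)/2 := rfl
    have hs := hsym w Complex.I 1
    have hk := hkey2 w
    rw [hs, hwd_def]
    rw [hwd_def, hwdb_def] at hk
    have hu : (g w)⁻¹ * g w = 1 := inv_mul_cancel₀ (hgne w)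
    linear_combination (-(Complex.I*((g w)⁻¹)^2/2)) * hk
      + (Complex.I*(g w)⁻¹/2*(fderiv ℝ (fderiv ℝ g) w 1 1 + fderiv ℝ (fderiv ℝ g) w Complex.I Complex.I)) * hu
      + (-(((g w)⁻¹)^2*((fderiv ℝ g w 1 - Complex.I * fderiv ℝ g w Complex.I)/2)*fderiv ℝ g w Complex.I)
        + (g w)⁻¹/2 * fderiv ℝ (fderiv ℝ g) w 1 Complex.I) * Complex.I_sq
  -- hf is smooth and entire
  have hwdgsm : ContDiff ℝ (⊤ : ℕ∞) (wd g) := by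
    rw [hwdg_eq]; exact contDiff_const.mul (hP.sub (contDiff_const.mul hQ))
  have hhfsm : ContDiff ℝ (⊤ : ℕ∞) hf := hwdgsm.mul (hg.inv hgne)
  have hfhol : Differentiable ℂ hf :=
    fun w => cr_diffAt ((hhfsm.differentiable (by simp)) w) (hCR w)
  -- relation: fderiv g in terms of hf
  have hwd_hf : ∀ z, wd g z = hf z * g z := by
    intro z
    rw [hfdef]
    simp only
    rw [mul_assoc, inv_mul_cancel₀ (hgne z), mul_one]
  have hDgv : ∀ z v, fderiv ℝ g z v = (hf z * g z) * v
      + ((starRingEnd ℂ) (hf z) * g z) * (starRingEnd ℂ) v := by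
    intro z v
    rw [clm_basis' (fderiv ℝ g z) v]
    have e1 : (fderiv ℝ g z 1 - Complex.I * fderiv ℝ g z Complex.I)/2 = hf z * g z := by
      rw [← hwd_hf z]; rfl
    have e2 : (fderiv ℝ g z 1 + Complex.I * fderiv ℝ g z Complex.I)/2
        = (starRingEnd ℂ) (hf z) * g z := by
      have e3 : (fderiv ℝ g z 1 + Complex.I * fderiv ℝ g z Complex.I)/2 = wdb g z := rfl
      rw [e3, hwdb_conj z, hwd_hf z, map_mul, hgconj]
    rw [e1, e2]
  -- primitive and exponential
  obtain ⟨F, hF⟩ := exists_primitive hfhol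
  set φ : ℂ → ℂ := fun z => Complex.exp (F z) with hφdef
  have hφd : ∀ z, HasDerivAt φ (φ z * hf z) z := fun z => (hF z).cexp
  have hφdiff : Differentiable ℂ φ := fun z => (hφd z).differentiableAt
  have hφne : ∀ z, φ z ≠ 0 := fun z => Complex.exp_ne_zero _
  -- the quotient |φ|²/g is constant
  set ψ : ℂ → ℂ := fun z => φ z * (starRingEnd ℂ) (φ z) * (g z)⁻¹ with hψdef
  have hψfd : ∀ z, HasFDerivAt ψ
      ((φ z * (starRingEnd ℂ) (φ z)) •
          ((-ContinuousLinearMap.mulLeftRight ℝ ℂ (g z)⁻¹ (g z)⁻¹).comp (fderiv ℝ g z))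
        + (g z)⁻¹ • (φ z • ((Complex.conjCLE.toContinuousLinearMap).comp
              (((1 : ℂ →L[ℂ] ℂ).smulRight (φ z * hf z)).restrictScalars ℝ))
            + ((starRingEnd ℂ) (φ z)) •
              (((1 : ℂ →L[ℂ] ℂ).smulRight (φ z * hf z)).restrictScalars ℝ))) z := by
    intro z
    have h1 : HasFDerivAt φ (((1 : ℂ →L[ℂ] ℂ).smulRight (φ z * hf z)).restrictScalars ℝ) z :=
      ((hφd z).hasFDerivAt).restrictScalars ℝ
    have h2 : HasFDerivAt (fun z => (starRingEnd ℂ) (φ z))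
        ((Complex.conjCLE.toContinuousLinearMap).comp
          (((1 : ℂ →L[ℂ] ℂ).smulRight (φ z * hf z)).restrictScalars ℝ)) z :=
      (Complex.conjCLE.toContinuousLinearMap.hasFDerivAt).comp z h1
    exact (h1.mul h2).mul (hinvfd z)
  have hψ0 : ∀ z, fderiv ℝ ψ z = 0 := by
    intro z
    rw [(hψfd z).fderiv]
    apply ContinuousLinearMap.ext
    intro v
    simp only [ContinuousLinearMap.add_apply, ContinuousLinearMap.smul_apply,
      ContinuousLinearMap.comp_apply, ContinuousLinearMap.neg_apply,
      ContinuousLinearMap.mulLeftRight_apply, ContinuousLinearMap.coe_restrictScalars',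
      ContinuousLinearMap.smulRight_apply, ContinuousLinearMap.one_apply,
      ContinuousLinearMap.zero_apply, smul_eq_mul,
      ContinuousLinearEquiv.coe_coe, Complex.conjCLE_apply]
    rw [hDgv z v]
    simp only [map_mul]
    field_simp [hgne z]
    ring
  have hψdiff : Differentiable ℝ ψ := fun z => (hψfd z).differentiableAt
  have hψconst : ∀ z, ψ z = ψ 0 := fun z => is_const_of_fderiv_eq_zero hψdiff hψ0 z 0
  -- growth bound on g
  obtain ⟨G, hGsm, hGeq⟩ := hgrow
  obtain ⟨C₁, hC₁⟩ := (isCompact_closedBall (0:ℂ) 1).exists_bound_of_continuousOn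
    (hGsm.continuous.continuousOn)
  obtain ⟨C₂, hC₂⟩ := (isCompact_closedBall (0:ℂ) 1).exists_bound_of_continuousOn
    (hg.continuous.continuousOn)
  have hC₁0 : 0 ≤ C₁ := (norm_nonneg _).trans (hC₁ 0 (by simp))
  have hC₂0 : 0 ≤ C₂ := (norm_nonneg _).trans (hC₂ 0 (by simp))
  set C := C₁ + C₂ with hCdef
  have hC0 : 0 ≤ C := by positivity
  have hgbound : ∀ z, ‖g z‖ ≤ C * (1 + ‖z‖)^2 := by
    intro z
    have hone : (1:ℝ) ≤ (1 + ‖z‖)^2 := by nlinarith [norm_nonneg z]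
    rcases le_or_gt ‖z‖ 1 with hz | hz
    · have : ‖g z‖ ≤ C₂ := hC₂ z (by simpa using hz)
      calc ‖g z‖ ≤ C₂ := this
      _ = C₂ * 1 := by ring
      _ ≤ C * (1 + ‖z‖)^2 := by
          apply mul_le_mul (by simp [hCdef]; linarith) hone zero_le_one hC0
    · have hzne : z ≠ 0 := by
        intro h0; rw [h0, norm_zero] at hz; linarith
      have hzinv : z⁻¹ ≠ 0 := inv_ne_zero hzne
      have hh1 := hGeq z⁻¹ hzinv
      rw [inv_inv] at hh1
      have hconjne : (starRingEnd ℂ) z ≠ 0 := by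
        simpa using hzne
      have hgz : g z = G z⁻¹ * (z * (starRingEnd ℂ) z) := by
        rw [hh1, map_inv₀]
        field_simp
      have hnorm : ‖g z‖ = ‖G z⁻¹‖ * (‖z‖ * ‖z‖) := by
        rw [hgz]
        simp [norm_mul]
      have hGz : ‖G z⁻¹‖ ≤ C₁ := by
        apply hC₁
        simp only [mem_closedBall, dist_zero_right, norm_inv]
        rw [inv_le_one_iff₀]
        right; exact hz.le
      rw [hnorm]
      have h1 : ‖G z⁻¹‖ * (‖z‖ * ‖z‖) ≤ C₁ * (1+‖z‖)^2 := by
        apply mul_le_mul hGz (by nlinarith [norm_nonneg z]) (by positivity) hC₁0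
      calc ‖G z⁻¹‖ * (‖z‖ * ‖z‖) ≤ C₁ * (1+‖z‖)^2 := h1
      _ ≤ C * (1+‖z‖)^2 := by
          apply mul_le_mul_of_nonneg_right _ (by positivity)
          simp [hCdef]; linarith
  -- growth bound on φ
  set k : ℂ := ψ 0 with hkdef
  have hφg : ∀ z, φ z * (starRingEnd ℂ) (φ z) = k * g z := by
    intro z
    have h1 := hψconst z
    rw [hψdef] at h1
    simp only at h1
    calc φ z * (starRingEnd ℂ) (φ z)
        = φ z * (starRingEnd ℂ) (φ z) * (g z)⁻¹ * g z := by
          rw [mul_assoc, inv_mul_cancel₀ (hgne z), mul_one]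
    _ = k * g z := by rw [h1]
  have hφnorm : ∀ z, ‖φ z‖^2 = ‖k‖ * ‖g z‖ := by
    intro z
    have h2 : ‖φ z * (starRingEnd ℂ) (φ z)‖ = ‖φ z‖^2 := by
      simp [norm_mul]; ring
    rw [← h2, hφg z, norm_mul]
  set A : ℝ := Real.sqrt (‖k‖ * C) with hAdef
  have hA0 : 0 ≤ A := Real.sqrt_nonneg _
  have hφbound : ∀ z, ‖φ z‖ ≤ A + A * ‖z‖ := by
    intro z
    have h3 : ‖φ z‖^2 ≤ (‖k‖ * C) * (1+‖z‖)^2 := by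
      rw [hφnorm z, mul_assoc]
      apply mul_le_mul_of_nonneg_left (hgbound z) (norm_nonneg k)
    have h4 : ‖φ z‖ = Real.sqrt (‖φ z‖^2) := by
      rw [Real.sqrt_sq (norm_nonneg _)]
    rw [h4]
    calc Real.sqrt (‖φ z‖^2) ≤ Real.sqrt ((‖k‖ * C) * (1+‖z‖)^2) := Real.sqrt_le_sqrt h3
    _ = A * (1+‖z‖) := by
        rw [Real.sqrt_mul (by positivity), Real.sqrt_sq (by positivity), hAdef]
    _ = A + A * ‖z‖ := by ring
  -- conclude φ is constant
  have hφconst : ∀ z, φ z = φ 0 := linear_growth_const hφdiff hφbound hφne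
  -- conclude g is constant
  refine ⟨g 0, fun z => ?_⟩
  have h5 := hψconst z
  rw [hψdef] at h5
  simp only at h5
  rw [hφconst z] at h5
  have h6 : φ 0 * (starRingEnd ℂ) (φ 0) ≠ 0 :=
    mul_ne_zero (hφne 0) (by simpa using hφne 0)
  have h7 : (g z)⁻¹ = (g 0)⁻¹ := mul_left_cancel₀ h6 h5
  have := congrArg (fun x => x⁻¹) h7
  simpa [inv_inv] using this
end

section
/- Let g be a smooth nonnegative real-valued function on ℂ satisfying g·∂²g/∂w∂w̄ = (∂g/∂w)·(∂g/∂w̄) on ℂ, such that w ↦ w·w̄·g(1/w) extends smoothly at 0. If g is not identically zero, then g has at most one zero in ℂ. -/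
open Complex Filter Topology

noncomputable def dd (v : ℂ → ℝ) (e z : ℂ) : ℝ := fderiv ℝ v z e

noncomputable def lap (v : ℂ → ℝ) (z : ℂ) : ℝ :=
  dd (dd v 1) 1 z + dd (dd v Complex.I) Complex.I z

lemma dd_of_hasFDerivAt {v : ℂ → ℝ} {L : ℂ →L[ℝ] ℝ} {z : ℂ} (h : HasFDerivAt v L z) (e : ℂ) :
    dd v e z = L e := by rw [dd, h.fderiv]

lemma dd_dd_eq {v : ℂ → ℝ} {z : ℂ} (h : DifferentiableAt ℝ (fderiv ℝ v) z) (e₁ e₂ : ℂ) :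
    dd (dd v e₁) e₂ z = fderiv ℝ (fderiv ℝ v) z e₂ e₁ := by
  have h2 : HasFDerivAt (dd v e₁)
      (((ContinuousLinearMap.apply ℝ ℝ e₁)).comp (fderiv ℝ (fderiv ℝ v) z)) z :=
    ((ContinuousLinearMap.apply ℝ ℝ e₁).hasFDerivAt).comp z h.hasFDerivAt
  rw [dd_of_hasFDerivAt h2]
  rfl

/-- 1-D second derivative test. -/
lemma sdt_1d {ψ : ℝ → ℝ} (hd : ∀ᶠ t in 𝓝 (0:ℝ), DifferentiableAt ℝ ψ t)
    (hd2 : DifferentiableAt ℝ (deriv ψ) 0) (hmax : IsLocalMax ψ 0) :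
    deriv (deriv ψ) 0 ≤ 0 := by
  by_contra hpos
  push_neg at hpos
  have h0 : deriv ψ 0 = 0 := hmax.deriv_eq_zero
  have hslope : Tendsto (slope (deriv ψ) 0) (𝓝[≠] 0) (𝓝 (deriv (deriv ψ)  0)) :=
    hasDerivAt_iff_tendsto_slope.1 hd2.hasDerivAt
  have hev : ∀ᶠ t in 𝓝[>] (0:ℝ), 0 < slope (deriv ψ) 0 t := by
    have : ∀ᶠ t in 𝓝[≠] (0:ℝ), 0 < slope (deriv ψ) 0 t :=
      hslope.eventually (eventually_gt_nhds hpos)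
    exact this.filter_mono (nhdsWithin_mono _ (by intro t ht; exact ne_of_gt ht))
  have hev' : ∀ᶠ t in 𝓝[>] (0:ℝ), 0 < deriv ψ t := by
    filter_upwards [hev, self_mem_nhdsWithin] with t ht ht'
    have h1 : slope (deriv ψ) 0 t = t⁻¹ * deriv ψ t := by simp [slope, h0]
    rw [h1] at ht
    have ht'' : (0:ℝ) < t := ht'
    have := mul_pos ht'' ht
    rwa [mul_inv_cancel_left₀ (ne_of_gt ht'')] at this
  have hall : ∀ᶠ t in 𝓝 (0:ℝ),
      (t ∈ Set.Ioi (0:ℝ) → 0 < deriv ψ t) ∧ DifferentiableAt ℝ ψ t ∧ ψ t ≤ ψ 0 :=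
    (eventually_nhdsWithin_iff.mp hev').and (hd.and hmax)
  rcases Metric.eventually_nhds_iff_ball.mp hall with ⟨δ, hδpos, hδ⟩
  have hmem : ∀ t : ℝ, t ∈ Set.Icc (0:ℝ) (δ/2) → t ∈ Metric.ball (0:ℝ) δ := by
    intro t ht
    rw [Metric.mem_ball, Real.dist_eq, sub_zero, _root_.abs_of_nonneg ht.1]
    linarith [ht.2]
  have hmono : StrictMonoOn ψ (Set.Icc (0:ℝ) (δ/2)) := by
    apply strictMonoOn_of_deriv_pos (convex_Icc _ _)
    · intro t ht
      exact ((hδ t (hmem t ht)).2.1).continuousAt.continuousWithinAt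
    · intro t ht
      rw [interior_Icc] at ht
      exact (hδ t (hmem t ⟨le_of_lt ht.1, le_of_lt ht.2⟩)).1 ht.1
  have h1 : ψ 0 < ψ (δ/2) :=
    hmono (Set.mem_Icc.2 ⟨le_rfl, by linarith⟩) (Set.mem_Icc.2 ⟨by linarith, le_rfl⟩)
      (by linarith)
  have h2 : ψ (δ/2) ≤ ψ 0 := (hδ (δ/2) (hmem _ (Set.mem_Icc.2 ⟨by linarith, le_rfl⟩))).2.2
  linarith

lemma dd_congr {f h : ℂ → ℝ} {z : ℂ} (hfh : f =ᶠ[𝓝 z] h) (e : ℂ) :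
    dd f e z = dd h e z := by rw [dd, dd, hfh.fderiv_eq]

lemma eventually_contDiffAt {f : ℂ → ℝ} {z : ℂ} (hf : ContDiffAt ℝ 2 f z) :
    ∀ᶠ w in 𝓝 z, ContDiffAt ℝ 2 f w := by
  obtain ⟨U, hU, hfU⟩ := hf.contDiffOn le_rfl (by simp)
  filter_upwards [isOpen_interior.mem_nhds (mem_interior_iff_mem_nhds.2 hU)] with w hw
  exact (hfU.mono interior_subset).contDiffAt (isOpen_interior.mem_nhds hw)

/-- Second derivative test in each direction. -/
lemma sdt_dir {f : ℂ → ℝ} {z : ℂ} (hf : ContDiffAt ℝ 2 f z) (hmax : IsLocalMax f z) (e : ℂ) :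
    dd (dd f e) e z ≤ 0 := by
  set ℓ : ℝ → ℂ := fun t => z + t • e with hℓdef
  have hℓ : ∀ t : ℝ, HasDerivAt ℓ e t := by
    intro t
    simpa [hℓdef] using ((hasDerivAt_id t).smul_const e).const_add z
  have hℓ0 : ℓ 0 = z := by simp [hℓdef]
  set ψ : ℝ → ℝ := f ∘ ℓ with hψdef
  have hev : ∀ᶠ t in 𝓝 (0:ℝ), ContDiffAt ℝ 2 f (ℓ t) := by
    have hc : Tendsto ℓ (𝓝 0) (𝓝 z) := by
      rw [← hℓ0]; exact (hℓ 0).continuousAt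
    exact hc.eventually (eventually_contDiffAt hf)
  have hder : ∀ᶠ t in 𝓝 (0:ℝ), HasDerivAt ψ (dd f e (ℓ t)) t := by
    filter_upwards [hev] with t ht
    exact ((ht.differentiableAt two_ne_zero).hasFDerivAt).comp_hasDerivAt t (hℓ t)
  have hψd : ∀ᶠ t in 𝓝 (0:ℝ), DifferentiableAt ℝ ψ t := by
    filter_upwards [hder] with t ht; exact ht.differentiableAt
  have hderiv_eq : deriv ψ =ᶠ[𝓝 (0:ℝ)] (fun t => dd f e (ℓ t)) := by
    filter_upwards [hder] with t ht; exact ht.deriv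
  have hdd : DifferentiableAt ℝ (dd f e) z := by
    have h1 : ContDiffAt ℝ 1 (fderiv ℝ f) z := hf.fderiv_right (by norm_num)
    exact ((ContinuousLinearMap.apply ℝ ℝ e).differentiableAt).comp z
      (h1.differentiableAt one_ne_zero)
  have hcomp : HasDerivAt (fun t => dd f e (ℓ t)) (fderiv ℝ (dd f e) z e) 0 := by
    have h' : HasFDerivAt (dd f e) (fderiv ℝ (dd f e) z) (ℓ 0) := by
      rw [hℓ0]; exact hdd.hasFDerivAt
    exact h'.comp_hasDerivAt 0 (hℓ 0)
  have h2 : deriv (deriv ψ) 0 = dd (dd f e) e z := by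
    have : deriv (deriv ψ) 0 = deriv (fun t => dd f e (ℓ t)) 0 := hderiv_eq.deriv_eq
    rw [this, hcomp.deriv]; rfl
  have hmaxψ : IsLocalMax ψ 0 := by
    apply IsMaxFilter.comp_tendsto
    · rw [hℓ0]; exact hmax
    · rw [← hℓ0] at hmax ⊢; exact (hℓ 0).continuousAt
  have hd2 : DifferentiableAt ℝ (deriv ψ) 0 := by
    rw [Filter.EventuallyEq.differentiableAt_iff hderiv_eq]
    exact hcomp.differentiableAt
  have := sdt_1d hψd hd2 hmaxψ
  rwa [h2] at this

lemma sdt {f : ℂ → ℝ} {z : ℂ} (hf : ContDiffAt ℝ 2 f z) (hmax : IsLocalMax f z) :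
    lap f z ≤ 0 :=
  add_nonpos (sdt_dir hf hmax 1) (sdt_dir hf hmax Complex.I)

lemma dd_log {v : ℂ → ℝ} (hv : ∀ w, DifferentiableAt ℝ v w) {w : ℂ} (hw : v w ≠ 0) (e : ℂ) :
    dd (fun x => Real.log (v x)) e w = (v w)⁻¹ * dd v e w := by
  rw [dd_of_hasFDerivAt ((hv w).hasFDerivAt.log hw)]
  simp [dd]

lemma dd_dd_log {v : ℂ → ℝ} (hv : ContDiff ℝ 2 v) {z : ℂ} (hz : v z ≠ 0) (e : ℂ) :
    dd (dd (fun x => Real.log (v x)) e) e z =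
      (v z)⁻¹ * dd (dd v e) e z - (dd v e z)^2 * ((v z)^2)⁻¹ := by
  have hvd : ∀ w, DifferentiableAt ℝ v w :=
    fun w => (hv.differentiable two_ne_zero).differentiableAt
  have hvopen : ∀ᶠ w in 𝓝 z, v w ≠ 0 :=
    ((hv.continuous).continuousAt).eventually_ne hz
  have he : (dd (fun x => Real.log (v x)) e) =ᶠ[𝓝 z] (fun w => (v w)⁻¹ * dd v e w) := by
    filter_upwards [hvopen] with w hw
    exact dd_log hvd hw e
  rw [dd_congr he]
  have hdde : HasFDerivAt (dd v e) (fderiv ℝ (dd v e) z) z := by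
    have h1 : ContDiff ℝ 1 (fderiv ℝ v) := hv.fderiv_right (by norm_num)
    have : DifferentiableAt ℝ (dd v e) z :=
      ((ContinuousLinearMap.apply ℝ ℝ e).differentiableAt).comp z
        ((h1.differentiable one_ne_zero).differentiableAt)
    exact this.hasFDerivAt
  have hinv : HasFDerivAt (fun w => (v w)⁻¹) ((-((v z)^2)⁻¹) • fderiv ℝ v z) z :=
    (hasDerivAt_inv hz).comp_hasFDerivAt z (hvd z).hasFDerivAt
  have hmul := hinv.mul hdde
  rw [dd_of_hasFDerivAt (v := fun w => (v w)⁻¹ * dd v e w) hmul]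
  simp only [ContinuousLinearMap.add_apply, ContinuousLinearMap.smul_apply,
    ContinuousLinearMap.neg_apply, smul_eq_mul]
  have h1 : (fderiv ℝ (dd v e) z) e = dd (dd v e) e z := rfl
  have h2 : (fderiv ℝ v z) e = dd v e z := rfl
  rw [h1, h2]
  ring

lemma lap_log {v : ℂ → ℝ} (hv : ContDiff ℝ 2 v) {z : ℂ} (hz : v z ≠ 0) :
    lap (fun x => Real.log (v x)) z =
      (v z * lap v z - (dd v 1 z)^2 - (dd v Complex.I z)^2) / (v z)^2 := by
  rw [lap, dd_dd_log hv hz, dd_dd_log hv hz, lap]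
  field_simp
  ring

lemma dd_diff {f : ℂ → ℝ} {z : ℂ} (hf : ContDiffAt ℝ 2 f z) (e : ℂ) :
    DifferentiableAt ℝ (dd f e) z :=
  ((ContinuousLinearMap.apply ℝ ℝ e).differentiableAt).comp z
    ((hf.fderiv_right (m := 1) (by norm_num)).differentiableAt one_ne_zero)

lemma lap_combo {f h : ℂ → ℝ} {z : ℂ} (hf : ContDiffAt ℝ 2 f z) (hh : ContDiffAt ℝ 2 h z)
    (a b : ℝ) : lap (fun w => a * f w + b * h w) z = a * lap f z + b * lap h z := by
  have key : ∀ e : ℂ, dd (dd (fun w => a * f w + b * h w) e) e z =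
      a * dd (dd f e) e z + b * dd (dd h e) e z := by
    intro e
    have hev : dd (fun w => a * f w + b * h w) e =ᶠ[𝓝 z]
        (fun w => a * dd f e w + b * dd h e w) := by
      filter_upwards [eventually_contDiffAt hf, eventually_contDiffAt hh] with w hfw hhw
      have h1 : HasFDerivAt (fun w => a * f w + b * h w)
          (a • fderiv ℝ f w + b • fderiv ℝ h w) w :=
        (((hfw.differentiableAt two_ne_zero).hasFDerivAt).const_mul a).add
          (((hhw.differentiableAt two_ne_zero).hasFDerivAt).const_mul b)
      rw [dd_of_hasFDerivAt h1]
      simp [dd]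
    rw [dd_congr hev]
    have h2 : HasFDerivAt (fun w => a * dd f e w + b * dd h e w)
        (a • fderiv ℝ (dd f e) z + b • fderiv ℝ (dd h e) z) z :=
      (((dd_diff hf e).hasFDerivAt).const_mul a).add
        (((dd_diff hh e).hasFDerivAt).const_mul b)
    rw [dd_of_hasFDerivAt h2]
    simp [dd]
  rw [lap, key, key, lap, lap]
  ring

/-- The squared distance to `a`, written via re and im. -/
def Q (a : ℂ) (w : ℂ) : ℝ := (w.re - a.re)^2 + (w.im - a.im)^2

lemma Q_contDiff (a : ℂ) : ContDiff ℝ 2 (Q a) :=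
  ((Complex.reCLM.contDiff.sub contDiff_const).pow 2).add
    ((Complex.imCLM.contDiff.sub contDiff_const).pow 2)

lemma Q_nonneg (a w : ℂ) : 0 ≤ Q a w := by rw [Q]; positivity

lemma Q_eq_sq_norm (a w : ℂ) : Q a w = ‖w - a‖^2 := by
  have h : ‖w - a‖^2 = Complex.normSq (w - a) := by
    rw [← Complex.sq_norm]
  rw [Q, h, Complex.normSq_apply, Complex.sub_re, Complex.sub_im]; ring

lemma Q_pos (a w : ℂ) (h : w ≠ a) : 0 < Q a w := by
  rw [Q_eq_sq_norm]
  have h2 : w - a ≠ 0 := sub_ne_zero.2 h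
  have h3 : ‖w - a‖ ≠ 0 := norm_ne_zero_iff.2 h2
  positivity

lemma hasFDerivAt_Q (a z : ℂ) : HasFDerivAt (Q a)
    ((2*(z.re - a.re)) • (Complex.reCLM : ℂ →L[ℝ] ℝ)
      + (2*(z.im - a.im)) • (Complex.imCLM : ℂ →L[ℝ] ℝ)) z := by
  have hre : HasFDerivAt (fun w : ℂ => w.re - a.re) (Complex.reCLM : ℂ →L[ℝ] ℝ) z :=
    (Complex.reCLM.hasFDerivAt).sub_const _
  have him : HasFDerivAt (fun w : ℂ => w.im - a.im) (Complex.imCLM : ℂ →L[ℝ] ℝ) z :=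
    (Complex.imCLM.hasFDerivAt).sub_const _
  have h := ((hre.mul hre).add (him.mul him))
  refine (h.congr_of_eventuallyEq (Filter.Eventually.of_forall fun w => ?_)).congr_fderiv ?_
  · simp only [Q, Pi.add_apply, Pi.mul_apply]; ring
  · module

lemma dd_Q (a z e : ℂ) : dd (Q a) e z = 2*(z.re - a.re)*e.re + 2*(z.im - a.im)*e.im := by
  rw [dd_of_hasFDerivAt (hasFDerivAt_Q a z)]
  simp

lemma dd_dd_Q (a z e : ℂ) : dd (dd (Q a) e) e z = 2*e.re^2 + 2*e.im^2 := by
  have hfun : dd (Q a) e = fun z => 2*(z.re - a.re)*e.re + 2*(z.im - a.im)*e.im := by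
    funext w; exact dd_Q a w e
  rw [hfun]
  have hre : HasFDerivAt (fun w : ℂ => w.re - a.re) (Complex.reCLM : ℂ →L[ℝ] ℝ) z :=
    (Complex.reCLM.hasFDerivAt).sub_const _
  have him : HasFDerivAt (fun w : ℂ => w.im - a.im) (Complex.imCLM : ℂ →L[ℝ] ℝ) z :=
    (Complex.imCLM.hasFDerivAt).sub_const _
  have h : HasFDerivAt (fun w : ℂ => 2*(w.re - a.re)*e.re + 2*(w.im - a.im)*e.im)
      ((2*e.re) • (Complex.reCLM : ℂ →L[ℝ] ℝ) + (2*e.im) • (Complex.imCLM : ℂ →L[ℝ] ℝ)) z := by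
    have h1 := ((hre.const_mul (2:ℝ)).mul_const e.re).add ((him.const_mul (2:ℝ)).mul_const e.im)
    refine h1.congr_fderiv ?_
    module
  rw [dd_of_hasFDerivAt h]
  simp
  ring

lemma lap_Q (a z : ℂ) : lap (Q a) z = 4 := by
  rw [lap, dd_dd_Q, dd_dd_Q]
  simp
  norm_num

lemma lap_log_Q (a : ℂ) {z : ℂ} (hz : z ≠ a) :
    lap (fun w => Real.log (Q a w)) z = 0 := by
  have hQz : Q a z ≠ 0 := ne_of_gt (Q_pos a z hz)
  rw [lap_log (Q_contDiff a) hQz, lap_Q, dd_Q, dd_Q]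
  have : Q a z * 4 - (2*(z.re - a.re)*(1:ℂ).re + 2*(z.im - a.im)*(1:ℂ).im)^2
      - (2*(z.re - a.re)*Complex.I.re + 2*(z.im - a.im)*Complex.I.im)^2 = 0 := by
    simp [Q]
    ring
  rw [this, zero_div]

/-- The function 1 + |w|^2. -/
def P (w : ℂ) : ℝ := 1 + Q 0 w

lemma P_contDiff : ContDiff ℝ 2 P := contDiff_const.add (Q_contDiff 0)

lemma P_pos (w : ℂ) : 0 < P w := by
  have := Q_nonneg 0 w
  rw [P]; linarith

lemma dd_P_eq (e : ℂ) : dd P e = dd (Q 0) e := by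
  funext z
  have h : HasFDerivAt P (0 + ((2*(z.re - (0:ℂ).re)) • (Complex.reCLM : ℂ →L[ℝ] ℝ)
      + (2*(z.im - (0:ℂ).im)) • (Complex.imCLM : ℂ →L[ℝ] ℝ))) z :=
    (hasFDerivAt_const 1 z).add (hasFDerivAt_Q 0 z)
  rw [dd_of_hasFDerivAt h, dd_Q]
  simp

lemma lap_log_P (z : ℂ) : lap (fun w => Real.log (P w)) z = 4 / (P z)^2 := by
  have hPz : P z ≠ 0 := ne_of_gt (P_pos z)
  have hlapP : lap P z = 4 := by
    rw [lap, dd_P_eq, dd_P_eq, ← lap, lap_Q]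
  have hddP1 : dd P 1 z = 2*z.re := by
    rw [dd_P_eq, dd_Q]; simp
  have hddPI : dd P Complex.I z = 2*z.im := by
    rw [dd_P_eq, dd_Q]; simp
  rw [lap_log P_contDiff hPz, hlapP, hddP1, hddPI]
  have h4 : P z * 4 - (2*z.re)^2 - (2*z.im)^2 = 4 := by
    rw [P, Q]; simp; ring
  rw [h4]

lemma pde_real {g : ℂ → ℂ} (hg : ContDiff ℝ 2 g) (hgreal : ∀ w, (g w).im = 0)
    (heq : ∀ w, g w * wd (wdb g) w = wd g w * wdb g w) (z : ℂ) :
    (g z).re * lap (fun w => (g w).re) z =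
      (dd (fun w => (g w).re) 1 z)^2 + (dd (fun w => (g w).re) Complex.I z)^2 := by
  set u : ℂ → ℝ := fun w => (g w).re with hudef
  have hu : ContDiff ℝ 2 u := Complex.reCLM.contDiff.comp hg
  have hgu : g = fun w => ((u w : ℝ) : ℂ) := by
    funext w
    apply Complex.ext
    · simp [hudef]
    · simp [hudef, hgreal w]
  have hud : ∀ w, DifferentiableAt ℝ u w :=
    fun w => (hu.differentiable two_ne_zero).differentiableAt
  have hfd : ∀ w e, fderiv ℝ g w e = ((fderiv ℝ u w e : ℝ) : ℂ) := by
    intro w e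
    have h : HasFDerivAt g (Complex.ofRealCLM.comp (fderiv ℝ u w)) w := by
      rw [hgu]
      exact Complex.ofRealCLM.hasFDerivAt.comp w (hud w).hasFDerivAt
    rw [h.fderiv]
    rfl
  -- wdb g as explicit function
  have hwdb : wdb g = fun w => (2:ℂ)⁻¹ * ((dd u 1 w : ℝ) + Complex.I * (dd u Complex.I w : ℝ)) := by
    funext w
    rw [wdb, hfd, hfd]
    rw [div_eq_inv_mul]
    rfl
  -- derivative of wdb g
  have hdd1 : ∀ w, DifferentiableAt ℝ (dd u 1) w := fun w => dd_diff hu.contDiffAt 1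
  have hddI : ∀ w, DifferentiableAt ℝ (dd u Complex.I) w := fun w => dd_diff hu.contDiffAt Complex.I
  have hfwdb : ∀ w e, fderiv ℝ (wdb g) w e =
      ((dd (dd u 1) e w : ℝ) + Complex.I * (dd (dd u Complex.I) e w : ℝ))/2 := by
    intro w e
    have h1 : HasFDerivAt (fun w => ((dd u 1 w : ℝ) : ℂ))
        (Complex.ofRealCLM.comp (fderiv ℝ (dd u 1) w)) w :=
      Complex.ofRealCLM.hasFDerivAt.comp w (hdd1 w).hasFDerivAt
    have h2 : HasFDerivAt (fun w => ((dd u Complex.I w : ℝ) : ℂ))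
        (Complex.ofRealCLM.comp (fderiv ℝ (dd u Complex.I) w)) w :=
      Complex.ofRealCLM.hasFDerivAt.comp w (hddI w).hasFDerivAt
    have h3 := ((h1.add (h2.const_mul Complex.I)).const_mul ((2:ℂ)⁻¹))
    rw [hwdb]
    rw [HasFDerivAt.fderiv (f := fun w => (2:ℂ)⁻¹ * (((dd u 1 w : ℝ) : ℂ) + Complex.I * ((dd u Complex.I w : ℝ) : ℂ))) h3]
    simp [dd]
    ring
  -- symmetry of second derivatives
  have hsymm : dd (dd u 1) Complex.I z = dd (dd u Complex.I) 1 z := by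
    have hdf : DifferentiableAt ℝ (fderiv ℝ u) z :=
      ((hu.fderiv_right (m := 1) (by norm_num)).differentiable one_ne_zero).differentiableAt
    rw [dd_dd_eq hdf, dd_dd_eq hdf]
    exact (hu.contDiffAt.isSymmSndFDerivAt (by simp)) Complex.I 1
  -- the complex identity from heq
  have h := heq z
  rw [wd, hfwdb, hfwdb, wd, wdb, hfd, hfd] at h
  have hgz : g z = ((u z : ℝ) : ℂ) := by rw [hgu]
  rw [hgz] at h
  -- now extract real part
  have key : (u z) * (dd (dd u 1) 1 z + dd (dd u Complex.I) Complex.I z)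
      = (fderiv ℝ u z 1)^2 + (fderiv ℝ u z Complex.I)^2 := by
    have h2 := congrArg Complex.re h
    rw [hsymm] at h2
    simp only [Complex.div_re, Complex.add_re, Complex.sub_re, Complex.mul_re,
      Complex.ofReal_re, Complex.ofReal_im, Complex.I_re, Complex.I_im,
      Complex.div_im, Complex.add_im, Complex.sub_im, Complex.mul_im,
      Complex.normSq_apply, Complex.re_ofNat, Complex.im_ofNat] at h2
    ring_nf at h2 ⊢
    nlinarith [h2]
  show u z * lap u z = dd u 1 z ^ 2 + dd u Complex.I z ^ 2
  unfold lap
  rw [key]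
  rfl

lemma quad_bound {u : ℂ → ℝ} (hu : ContDiff ℝ 2 u) {a : ℂ} (hmin : ∀ w, u a ≤ u w) :
    ∃ C : ℝ, 0 < C ∧ ∃ δ : ℝ, 0 < δ ∧ ∀ w, dist w a < δ → u w ≤ u a + C * Q a w := by
  have hC1 : ContDiffAt ℝ 1 (fderiv ℝ u) a := (hu.fderiv_right (by norm_num)).contDiffAt
  obtain ⟨K, t, ht, hlip⟩ := hC1.exists_lipschitzOnWith
  obtain ⟨δ, hδpos, hball⟩ := Metric.mem_nhds_iff.1 ht
  have hmin' : IsLocalMin u a := Filter.Eventually.of_forall hmin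
  have hfa : fderiv ℝ u a = 0 := hmin'.fderiv_eq_zero
  refine ⟨(K:ℝ) + 1, by positivity, δ/2, by positivity, fun w hw => ?_⟩
  set r := dist w a with hr
  have hrδ : r < δ/2 := hw
  have hsub : Metric.closedBall a r ⊆ Metric.ball a δ := by
    intro y hy
    rw [Metric.mem_closedBall] at hy
    rw [Metric.mem_ball]
    have : 0 ≤ r := dist_nonneg
    calc dist y a ≤ r := hy
    _ < δ := by linarith
  have hbound : ∀ y ∈ Metric.closedBall a r, ‖fderiv ℝ u y‖ ≤ ((K:ℝ)+1) * r := by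
    intro y hy
    have hyt : y ∈ t := hball (hsub hy)
    have hat : a ∈ t := mem_of_mem_nhds ht
    have := hlip.dist_le_mul y hyt a hat
    rw [dist_eq_norm, hfa, sub_zero] at this
    calc ‖fderiv ℝ u y‖ ≤ (K:ℝ) * dist y a := this
    _ ≤ (K:ℝ) * r := by
        exact mul_le_mul_of_nonneg_left (Metric.mem_closedBall.1 hy) K.coe_nonneg
    _ ≤ ((K:ℝ)+1) * r := by
        have : (0:ℝ) ≤ r := dist_nonneg
        nlinarith
  have hdiff : ∀ y ∈ Metric.closedBall a r, DifferentiableAt ℝ u y :=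
    fun y _ => (hu.differentiable two_ne_zero).differentiableAt
  have hconv : Convex ℝ (Metric.closedBall a r) := convex_closedBall a r
  have haball : a ∈ Metric.closedBall a r := Metric.mem_closedBall_self dist_nonneg
  have hwball : w ∈ Metric.closedBall a r := by
    rw [Metric.mem_closedBall]
  have key := hconv.norm_image_sub_le_of_norm_fderiv_le hdiff hbound haball hwball
  have h1 : u w - u a ≤ ((K:ℝ)+1) * r * ‖w - a‖ :=
    le_trans (le_abs_self _) key
  have h2 : r = ‖w - a‖ := by rw [hr, dist_eq_norm]
  rw [h2] at h1
  rw [Q_eq_sq_norm]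
  nlinarith [h1]

set_option maxHeartbeats 1000000 in
lemma main_aux {u : ℂ → ℝ} {w₁ w₂ z₀ : ℂ} (hu2 : ContDiff ℝ 2 u)
    (hpos : ∀ w, 0 ≤ u w)
    (hPDE : ∀ z, u z * lap u z = (dd u 1 z)^2 + (dd u Complex.I z)^2)
    (hM : ∃ M, 1 ≤ M ∧ ∀ w : ℂ, 1 ≤ ‖w‖ → u w ≤ M * Q 0 w)
    (hz₁ : u w₁ = 0) (hz₂ : u w₂ = 0) (hz₀ : 0 < u z₀) (h12 : w₁ ≠ w₂) : False := by
  obtain ⟨M, hM1, hMb⟩ := hM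
  -- quadratic bounds at the two zeros
  obtain ⟨C₁, hC₁, δ₁, hδ₁, hq₁⟩ := quad_bound hu2 (fun w => by rw [hz₁]; exact hpos w)
  obtain ⟨C₂, hC₂, δ₂, hδ₂, hq₂⟩ := quad_bound hu2 (fun w => by rw [hz₂]; exact hpos w)
  rw [hz₁] at hq₁
  rw [hz₂] at hq₂
  simp only [zero_add] at hq₁ hq₂
  -- the comparison function
  set φ : ℂ → ℝ := fun w => 1 * Real.log (u w) +
    1 * ((-3/4) * Real.log (Q w₁ w) +
      1 * ((-3/4) * Real.log (Q w₂ w) + (1/4) * Real.log (P w))) with hφdef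
  have hφ_eq : ∀ w, φ w = Real.log (u w) + (-3/4) * Real.log (Q w₁ w)
      + (-3/4) * Real.log (Q w₂ w) + (1/4) * Real.log (P w) := by
    intro w; rw [hφdef]; ring
  obtain ⟨c, hcdef⟩ : ∃ x : ℝ, x = φ z₀ := ⟨_, rfl⟩
  -- continuity
  have hucont : Continuous u := hu2.continuous
  have hne₁ : ∀ w, 0 < u w → w ≠ w₁ := by
    intro w hw h; rw [h, hz₁] at hw; exact lt_irrefl 0 hw
  have hne₂ : ∀ w, 0 < u w → w ≠ w₂ := by
    intro w hw h; rw [h, hz₂] at hw; exact lt_irrefl 0 hw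
  have hφcont : ∀ w, 0 < u w → ContinuousAt φ w := by
    intro w hw
    have l1 : ContinuousAt (fun x => Real.log (u x)) w :=
      (Real.continuousAt_log (ne_of_gt hw)).comp hucont.continuousAt
    have l2 : ContinuousAt (fun x => Real.log (Q w₁ x)) w :=
      (Real.continuousAt_log (ne_of_gt (Q_pos _ _ (hne₁ w hw)))).comp
        (Q_contDiff w₁).continuous.continuousAt
    have l3 : ContinuousAt (fun x => Real.log (Q w₂ x)) w :=
      (Real.continuousAt_log (ne_of_gt (Q_pos _ _ (hne₂ w hw)))).comp
        (Q_contDiff w₂).continuous.continuousAt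
    have l4 : ContinuousAt (fun x => Real.log (P x)) w :=
      (Real.continuousAt_log (ne_of_gt (P_pos _))).comp
        P_contDiff.continuous.continuousAt
    exact ((continuousAt_const.mul l1).add (continuousAt_const.mul
      ((continuousAt_const.mul l2).add (continuousAt_const.mul
        ((continuousAt_const.mul l3).add (continuousAt_const.mul l4))))))
  -- smoothness on the positivity set
  have hφsmooth : ∀ z, 0 < u z → ContDiffAt ℝ 2 φ z := by
    intro z hz
    have l1 : ContDiffAt ℝ 2 (fun x => Real.log (u x)) z :=
      (Real.contDiffAt_log.2 (ne_of_gt hz)).comp z hu2.contDiffAt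
    have l2 : ContDiffAt ℝ 2 (fun x => Real.log (Q w₁ x)) z :=
      (Real.contDiffAt_log.2 (ne_of_gt (Q_pos _ _ (hne₁ z hz)))).comp z
        (Q_contDiff w₁).contDiffAt
    have l3 : ContDiffAt ℝ 2 (fun x => Real.log (Q w₂ x)) z :=
      (Real.contDiffAt_log.2 (ne_of_gt (Q_pos _ _ (hne₂ z hz)))).comp z
        (Q_contDiff w₂).contDiffAt
    have l4 : ContDiffAt ℝ 2 (fun x => Real.log (P x)) z :=
      (Real.contDiffAt_log.2 (ne_of_gt (P_pos _))).comp z P_contDiff.contDiffAt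
    exact ((contDiffAt_const.mul l1).add (contDiffAt_const.mul
      ((contDiffAt_const.mul l2).add (contDiffAt_const.mul
        ((contDiffAt_const.mul l3).add (contDiffAt_const.mul l4))))))
  -- positive laplacian on the positivity set
  have hφlap : ∀ z, 0 < u z → 0 < lap φ z := by
    intro z hz
    have l1 : ContDiffAt ℝ 2 (fun x => Real.log (u x)) z :=
      (Real.contDiffAt_log.2 (ne_of_gt hz)).comp z hu2.contDiffAt
    have l2 : ContDiffAt ℝ 2 (fun x => Real.log (Q w₁ x)) z :=
      (Real.contDiffAt_log.2 (ne_of_gt (Q_pos _ _ (hne₁ z hz)))).comp z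
        (Q_contDiff w₁).contDiffAt
    have l3 : ContDiffAt ℝ 2 (fun x => Real.log (Q w₂ x)) z :=
      (Real.contDiffAt_log.2 (ne_of_gt (Q_pos _ _ (hne₂ z hz)))).comp z
        (Q_contDiff w₂).contDiffAt
    have l4 : ContDiffAt ℝ 2 (fun x => Real.log (P x)) z :=
      (Real.contDiffAt_log.2 (ne_of_gt (P_pos _))).comp z P_contDiff.contDiffAt
    have c34 : ContDiffAt ℝ 2 (fun x => (-3/4) * Real.log (Q w₂ x)
        + (1/4) * Real.log (P x)) z := by
      exact (contDiffAt_const.mul l3).add (contDiffAt_const.mul l4)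
    have c234 : ContDiffAt ℝ 2 (fun x => (-3/4) * Real.log (Q w₁ x) +
        1 * ((-3/4) * Real.log (Q w₂ x) + (1/4) * Real.log (P x))) z := by
      exact (contDiffAt_const.mul l2).add (contDiffAt_const.mul c34)
    -- compute laplacians of the pieces
    have hlap1 : lap (fun x => Real.log (u x)) z = 0 := by
      rw [lap_log hu2 (ne_of_gt hz)]
      have := hPDE z
      rw [show u z * lap u z - dd u 1 z ^ 2 - dd u Complex.I z ^ 2 = 0 by linarith]
      exact zero_div _
    have hlap2 : lap (fun x => Real.log (Q w₁ x)) z = 0 := lap_log_Q w₁ (hne₁ z hz)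
    have hlap3 : lap (fun x => Real.log (Q w₂ x)) z = 0 := lap_log_Q w₂ (hne₂ z hz)
    have hlap4 : lap (fun x => Real.log (P x)) z = 4 / (P z)^2 := lap_log_P z
    have e1 := lap_combo l3 l4 (-3/4 : ℝ) (1/4 : ℝ)
    have e2 := lap_combo l2 c34 (-3/4 : ℝ) (1 : ℝ)
    have e3 := lap_combo l1 c234 (1 : ℝ) (1 : ℝ)
    rw [hφdef]
    rw [e3, e2, e1, hlap1, hlap2, hlap3, hlap4]
    have : (0:ℝ) < 4 / (P z)^2 := by
      have := P_pos z
      positivity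
    linarith
  -- helper for log monotonicity
  have llog : ∀ {x y : ℝ}, 0 < x → x ≤ y → Real.log x ≤ Real.log y := by
    intro x y hx hxy
    exact (Real.log_le_log_iff hx (lt_of_lt_of_le hx hxy)).2 hxy
  have hM0 : (0:ℝ) < M := lt_of_lt_of_le one_pos hM1
  -- constants for the bound at infinity
  obtain ⟨B, hBdef⟩ : ∃ x : ℝ, x = max (max ‖w₁‖ ‖w₂‖) 1 := ⟨_, rfl⟩
  have hB1 : (1:ℝ) ≤ B := by rw [hBdef]; exact le_max_right _ _
  have hBw₁ : ‖w₁‖ ≤ B := by rw [hBdef]; exact le_trans (le_max_left _ _) (le_max_left _ _)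
  have hBw₂ : ‖w₂‖ ≤ B := by rw [hBdef]; exact le_trans (le_max_right _ _) (le_max_left _ _)
  obtain ⟨K₀, hK₀def⟩ : ∃ x : ℝ, x = Real.log M + (13/4) * Real.log 2 := ⟨_, rfl⟩
  obtain ⟨R, hRdef⟩ : ∃ x : ℝ, x = max (2*B) (Real.exp (2*(K₀ - c)) + 1) := ⟨_, rfl⟩
  have hR1 : (1:ℝ) ≤ R := by
    have : (2:ℝ) ≤ 2*B := by linarith
    have h2 : 2*B ≤ R := by rw [hRdef]; exact le_max_left _ _
    linarith
  -- the bound at infinity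
  have hRbound : ∀ w : ℂ, 0 < u w → R ≤ ‖w‖ → φ w < c := by
    intro w hw hRw
    obtain ⟨n, hndef⟩ : ∃ x : ℝ, x = ‖w‖ := ⟨_, rfl⟩
    rw [← hndef] at hRw
    have hn2B : 2*B ≤ n := le_trans (by rw [hRdef]; exact le_max_left _ _) hRw
    have hnexp : Real.exp (2*(K₀ - c)) + 1 ≤ n := le_trans (by rw [hRdef]; exact le_max_right _ _) hRw
    have hn1 : (1:ℝ) ≤ n := le_trans hR1 hRw
    have hn0 : (0:ℝ) < n := lt_of_lt_of_le one_pos hn1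
    have hQ0 : Q 0 w = n^2 := by rw [Q_eq_sq_norm, sub_zero, hndef]
    have ht1 : Real.log (u w) ≤ Real.log M + 2 * Real.log n := by
      have h1 : u w ≤ M * n^2 := by rw [← hQ0]; exact hMb w (by rw [hndef] at hn1; exact hn1)
      have h2 := llog hw h1
      rwa [Real.log_mul (ne_of_gt hM0) (by positivity), Real.log_pow,
        Nat.cast_ofNat] at h2
    have ht2 : ∀ a : ℂ, ‖a‖ ≤ B → 2 * (Real.log n - Real.log 2) ≤ Real.log (Q a w) := by
      intro a ha
      have h1 : n/2 ≤ ‖w - a‖ := by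
        have h2 : ‖w‖ - ‖a‖ ≤ ‖w - a‖ := norm_sub_norm_le w a
        rw [← hndef] at h2
        linarith
      have h3 : (0:ℝ) < n/2 := by linarith
      have h4 : (n/2)^2 ≤ Q a w := by
        rw [Q_eq_sq_norm]; nlinarith
      have h5 := llog (by positivity) h4
      rw [Real.log_pow, Nat.cast_ofNat, Real.log_div (ne_of_gt hn0) (by norm_num)] at h5
      linarith
    have ht3 : Real.log (P w) ≤ Real.log 2 + 2 * Real.log n := by
      have h1 : P w ≤ 2 * n^2 := by
        rw [P, hQ0]; nlinarith
      have h2 := llog (P_pos w) h1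
      rwa [Real.log_mul (by norm_num) (by positivity), Real.log_pow, Nat.cast_ofNat] at h2
    have hlogn : 2*(K₀ - c) < Real.log n := by
      refine (Real.lt_log_iff_exp_lt hn0).2 ?_
      have := Real.exp_pos (2*(K₀ - c))
      linarith
    have hb1 := ht2 w₁ hBw₁
    have hb2 := ht2 w₂ hBw₂
    rw [hφ_eq]
    linarith [ht1, ht3, hlogn, hb1, hb2, hK₀def]
  -- exclusion of zeros of u from the closure of S
  have hzero_excl : ∀ p : ℂ, u p = 0 →
      ∃ ε : ℝ, 0 < ε ∧ ∀ w, dist w p < ε → 0 < u w → φ w < c := by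
    have main : ∀ (a b : ℂ) (Ca δa : ℝ), 0 < Ca → 0 < δa →
        (∀ w, dist w a < δa → u w ≤ Ca * Q a w) → a ≠ b →
        ∃ ε : ℝ, 0 < ε ∧ ∀ w, dist w a < ε → 0 < u w →
          Real.log (u w) + (-3/4) * Real.log (Q a w)
          + (-3/4) * Real.log (Q b w) + (1/4) * Real.log (P w) < c := by
      intro a b Ca δa hCa hδa hqa hab
      obtain ⟨d, hddef⟩ : ∃ x : ℝ, x = dist a b := ⟨_, rfl⟩
      have hd0 : 0 < d := by rw [hddef]; exact dist_pos.2 hab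
      obtain ⟨pmax, hpmaxdef⟩ : ∃ x : ℝ, x = 1 + (‖a‖ + 1)^2 := ⟨_, rfl⟩
      have hpmax0 : (0:ℝ) < pmax := by rw [hpmaxdef]; positivity
      obtain ⟨q2min, hq2def⟩ : ∃ x : ℝ, x = (d/2)^2 := ⟨_, rfl⟩
      have hq2min0 : (0:ℝ) < q2min := by rw [hq2def]; positivity
      obtain ⟨K₁, hK₁def⟩ : ∃ x : ℝ, x = Real.log Ca + (-3/4) * Real.log q2min + (1/4) * Real.log pmax := ⟨_, rfl⟩
      refine ⟨min (min δa (d/2)) (min 1 (Real.exp (2*(c - K₁)))), ?_, ?_⟩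
      · have := Real.exp_pos (2*(c - K₁))
        have : (0:ℝ) < min 1 (Real.exp (2*(c - K₁))) := lt_min one_pos this
        have h2 : (0:ℝ) < min δa (d/2) := lt_min hδa (by linarith)
        exact lt_min h2 this
      intro w hw hwpos
      have hεδ : dist w a < δa :=
        lt_of_lt_of_le hw (le_trans (min_le_left _ _) (min_le_left _ _))
      have hεd : dist w a < d/2 :=
        lt_of_lt_of_le hw (le_trans (min_le_left _ _) (min_le_right _ _))
      have hε1 : dist w a < 1 :=
        lt_of_lt_of_le hw (le_trans (min_le_right _ _) (min_le_left _ _))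
      have hεe : dist w a < Real.exp (2*(c - K₁)) :=
        lt_of_lt_of_le hw (le_trans (min_le_right _ _) (min_le_right _ _))
      have hwa : w ≠ a := by
        intro h
        rw [h] at hwpos
        have h3 := hqa a (by rwa [dist_self])
        rw [Q_eq_sq_norm, sub_self] at h3
        simp at h3
        linarith
      have hQ1pos : 0 < Q a w := Q_pos _ _ hwa
      have hdist : dist w a = ‖w - a‖ := dist_eq_norm w a
      have hb1 : Real.log (u w) ≤ Real.log Ca + Real.log (Q a w) := by
        have h1 := hqa w hεδ
        have h2 := llog hwpos h1
        rwa [Real.log_mul (ne_of_gt hCa) (ne_of_gt hQ1pos)] at h2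
      have hb2 : Real.log q2min ≤ Real.log (Q b w) := by
        have h1 : d/2 ≤ dist w b := by
          have h2 := dist_triangle a w b
          have h3 : dist a w = dist w a := dist_comm a w
          linarith
      -- squared
        have h4 : q2min ≤ Q b w := by
          rw [Q_eq_sq_norm, hq2def, ← dist_eq_norm]
          nlinarith [dist_nonneg (x := w) (y := b)]
        exact llog hq2min0 h4
      have hb3 : Real.log (P w) ≤ Real.log pmax := by
        have h1 : ‖w‖ ≤ ‖a‖ + 1 := by
          have h2 : ‖w‖ - ‖a‖ ≤ ‖w - a‖ := norm_sub_norm_le w a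
          rw [← hdist] at h2
          linarith
        have h3 : P w ≤ pmax := by
          rw [P, Q_eq_sq_norm, sub_zero, hpmaxdef]
          nlinarith [norm_nonneg w]
        exact llog (P_pos w) h3
      have hb4 : Real.log (Q a w) < 4*(c - K₁) := by
        have h1 : Q a w < (Real.exp (2*(c - K₁)))^2 := by
          rw [Q_eq_sq_norm, ← hdist]
          nlinarith [dist_nonneg (x := w) (y := a), Real.exp_pos (2*(c-K₁))]
        have h2 := Real.log_lt_log hQ1pos h1
        rw [Real.log_pow, Nat.cast_ofNat, Real.log_exp] at h2
        linarith
      linarith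
    intro p hp
    by_cases hp1 : p = w₁
    · subst hp1
      obtain ⟨ε, hε, he⟩ := main p w₂ C₁ δ₁ hC₁ hδ₁ hq₁ (by rintro rfl; exact h12 rfl)
      refine ⟨ε, hε, fun w hw hwpos => ?_⟩
      rw [hφ_eq]
      have := he w hw hwpos
      linarith
    by_cases hp2 : p = w₂
    · subst hp2
      obtain ⟨ε, hε, he⟩ := main p w₁ C₂ δ₂ hC₂ hδ₂ hq₂ (by rintro rfl; exact h12 rfl)
      refine ⟨ε, hε, fun w hw hwpos => ?_⟩
      rw [hφ_eq]
      have := he w hw hwpos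
      linarith
    -- generic zero, away from w₁ and w₂
    · obtain ⟨d₁, hd₁def⟩ : ∃ x : ℝ, x = dist p w₁ := ⟨_, rfl⟩
      obtain ⟨d₂, hd₂def⟩ : ∃ x : ℝ, x = dist p w₂ := ⟨_, rfl⟩
      have hd₁0 : 0 < d₁ := by rw [hd₁def]; exact dist_pos.2 hp1
      have hd₂0 : 0 < d₂ := by rw [hd₂def]; exact dist_pos.2 hp2
      obtain ⟨pmax, hpmaxdef⟩ : ∃ x : ℝ, x = 1 + (‖p‖ + 1)^2 := ⟨_, rfl⟩
      have hpmax0 : (0:ℝ) < pmax := by rw [hpmaxdef]; positivity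
      obtain ⟨K₂, hK₂def⟩ : ∃ x : ℝ, x = (-3/4) * Real.log ((d₁/2)^2) + (-3/4) * Real.log ((d₂/2)^2)
        + (1/4) * Real.log pmax := ⟨_, rfl⟩
      obtain ⟨ε', hε'0, hε'⟩ := Metric.continuousAt_iff.1 hucont.continuousAt
        (Real.exp (c - K₂)) (Real.exp_pos _)
      refine ⟨min ε' (min (d₁/2) (min (d₂/2) 1)), ?_, ?_⟩
      · refine lt_min hε'0 (lt_min (by linarith) (lt_min (by linarith) one_pos))
      intro w hw hwpos
      have hwε' : dist w p < ε' := lt_of_lt_of_le hw (min_le_left _ _)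
      have hwd₁ : dist w p < d₁/2 :=
        lt_of_lt_of_le hw (le_trans (min_le_right _ _) (min_le_left _ _))
      have hwd₂ : dist w p < d₂/2 :=
        lt_of_lt_of_le hw (le_trans (min_le_right _ _)
          (le_trans (min_le_right _ _) (min_le_left _ _)))
      have hw1 : dist w p < 1 :=
        lt_of_lt_of_le hw (le_trans (min_le_right _ _)
          (le_trans (min_le_right _ _) (min_le_right _ _)))
      have hb1 : Real.log (u w) < c - K₂ := by
        have h1 := hε' hwε'
        rw [hp, dist_zero_right, Real.norm_eq_abs, abs_of_pos hwpos] at h1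
        exact (Real.log_lt_iff_lt_exp hwpos).2 h1
      have hgen : ∀ (b : ℂ) (db : ℝ), db = dist p b → 0 < db → dist w p < db/2 →
          Real.log ((db/2)^2) ≤ Real.log (Q b w) := by
        intro b db hdb hdb0 hwdb
        have h1 : db/2 ≤ dist w b := by
          have h2 := dist_triangle p w b
          have h3 : dist p w = dist w p := dist_comm p w
          linarith
        have h4 : (db/2)^2 ≤ Q b w := by
          rw [Q_eq_sq_norm, ← dist_eq_norm]
          nlinarith [dist_nonneg (x := w) (y := b)]
        exact llog (by positivity) h4
      have hb2 := hgen w₁ d₁ hd₁def hd₁0 hwd₁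
      have hb3 := hgen w₂ d₂ hd₂def hd₂0 hwd₂
      have hb4 : Real.log (P w) ≤ Real.log pmax := by
        have h1 : ‖w‖ ≤ ‖p‖ + 1 := by
          have h2 : ‖w‖ - ‖p‖ ≤ ‖w - p‖ := norm_sub_norm_le w p
          rw [← dist_eq_norm] at h2
          linarith
        have h3 : P w ≤ pmax := by
          rw [P, Q_eq_sq_norm, sub_zero, hpmaxdef]
          nlinarith [norm_nonneg w]
        exact llog (P_pos w) h3
      rw [hφ_eq]
      linarith
  -- the set S
  set S : Set ℂ := {w | 0 < u w ∧ c ≤ φ w} with hSdef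
  have hSclosed : IsClosed S := by
    refine isClosed_of_closure_subset ?_
    intro p hpcl
    have hup : 0 < u p := by
      rcases lt_or_eq_of_le (hpos p) with h | h
      · exact h
      · exfalso
        obtain ⟨ε, hε0, hε⟩ := hzero_excl p h.symm
        obtain ⟨w, hwS, hwd⟩ := Metric.mem_closure_iff.1 hpcl ε hε0
        have := hε w (by rwa [dist_comm]) hwS.1
        linarith [hwS.2]
    refine ⟨hup, ?_⟩
    have hTend : Filter.Tendsto φ (𝓝[S] p) (𝓝 (φ p)) :=
      ((hφcont p hup).continuousWithinAt)
    have hNB : (𝓝[S] p).NeBot := mem_closure_iff_nhdsWithin_neBot.1 hpcl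
    refine ge_of_tendsto hTend ?_
    filter_upwards [self_mem_nhdsWithin] with w hw
    exact hw.2
  have hSbounded : Bornology.IsBounded S := by
    refine (Metric.isBounded_closedBall (x := (0:ℂ)) (r := R)).subset ?_
    intro w hw
    rw [Metric.mem_closedBall, dist_zero_right]
    by_contra hcon
    push_neg at hcon
    have := hRbound w hw.1 (le_of_lt hcon)
    linarith [hw.2]
  have hScompact : IsCompact S := Metric.isCompact_of_isClosed_isBounded hSclosed hSbounded
  have hSne : S.Nonempty := ⟨z₀, hz₀, le_of_eq hcdef⟩
  have hScont : ContinuousOn φ S := fun w hw => (hφcont w hw.1).continuousWithinAt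
  obtain ⟨zm, hzmS, hzmax⟩ := hScompact.exists_isMaxOn hSne hScont
  have hloc : IsLocalMax φ zm := by
    have hev : ∀ᶠ w in 𝓝 zm, 0 < u w :=
      (hucont.continuousAt).eventually (eventually_gt_nhds hzmS.1)
    filter_upwards [hev] with w hw
    by_cases hc : c ≤ φ w
    · exact hzmax ⟨hw, hc⟩
    · push_neg at hc
      calc φ w ≤ c := le_of_lt hc
      _ ≤ φ zm := hzmS.2
  have h1 := sdt (hφsmooth zm hzmS.1) hloc
  have h2 := hφlap zm hzmS.1
  linarith

theorem stmt2 (g : ℂ → ℂ)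
    (hg : ContDiff ℝ (⊤ : ℕ∞) g)
    (hgreal : ∀ w, (g w).im = 0)
    (hgnonneg : ∀ w, 0 ≤ (g w).re)
    (heq : ∀ w, g w * wd (wdb g) w = wd g w * wdb g w)
    (hgrow : ∃ G : ℂ → ℂ, ContDiff ℝ (⊤ : ℕ∞) G ∧
      ∀ w : ℂ, w ≠ 0 → G w = w * (starRingEnd ℂ) w * g w⁻¹)
    (hne : ∃ w, g w ≠ 0) :
    ∀ w₁ w₂ : ℂ, g w₁ = 0 → g w₂ = 0 → w₁ = w₂ := by
  intro w₁ w₂ h₁ h₂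
  by_contra h12
  obtain ⟨G, hGsm, hGeq⟩ := hgrow
  obtain ⟨z₀, hz₀⟩ := hne
  have hg2 : ContDiff ℝ 2 g := hg.of_le (WithTop.coe_le_coe.2 le_top)
  have hu2 : ContDiff ℝ 2 (fun w => (g w).re) := Complex.reCLM.contDiff.comp hg2
  have hPDE := pde_real hg2 hgreal heq
  -- growth bound
  have hMex : ∃ M, 1 ≤ M ∧ ∀ w : ℂ, 1 ≤ ‖w‖ → (g w).re ≤ M * Q 0 w := by
    obtain ⟨M₀, hM₀⟩ := (isCompact_closedBall (0:ℂ) 1).exists_bound_of_continuousOn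
      (hGsm.continuous.continuousOn)
    refine ⟨max M₀ 1, le_max_right _ _, fun w hw => ?_⟩
    have hw0 : w ≠ 0 := by
      intro h; rw [h, norm_zero] at hw; linarith
    have hcw0 : (starRingEnd ℂ) w ≠ 0 := by
      simpa using hw0
    have hG := hGeq w⁻¹ (inv_ne_zero hw0)
    rw [inv_inv] at hG
    have hgw : g w = w * (starRingEnd ℂ) w * G w⁻¹ := by
      rw [hG, map_inv₀]
      field_simp
    have hnormG : ‖G w⁻¹‖ ≤ M₀ := by
      apply hM₀
      rw [Metric.mem_closedBall, dist_zero_right, norm_inv]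
      rw [inv_le_one_iff₀]
      right; exact hw
    have hnorm : ‖g w‖ = ‖w‖^2 * ‖G w⁻¹‖ := by
      rw [hgw, norm_mul, norm_mul, RCLike.norm_conj]
      ring
    have hre : (g w).re ≤ ‖g w‖ := Complex.re_le_norm (g w)
    have hQ : Q 0 w = ‖w‖^2 := by rw [Q_eq_sq_norm, sub_zero]
    rw [hQ]
    have h1 : ‖w‖^2 * ‖G w⁻¹‖ ≤ ‖w‖^2 * M₀ := by
      apply mul_le_mul_of_nonneg_left hnormG (by positivity)
    have h2 : ‖w‖^2 * M₀ ≤ max M₀ 1 * ‖w‖^2 := by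
      have h3 : M₀ ≤ max M₀ 1 := le_max_left _ _
      have h4 : (0:ℝ) ≤ ‖w‖^2 := by positivity
      nlinarith
    linarith
  -- zeros
  have hz₁ : (g w₁).re = 0 := by rw [h₁]; rfl
  have hz₂ : (g w₂).re = 0 := by rw [h₂]; rfl
  have hz₀pos : 0 < (g z₀).re := by
    rcases lt_or_eq_of_le (hgnonneg z₀) with h | h
    · exact h
    · exfalso
      apply hz₀
      apply Complex.ext
      · exact h.symm
      · exact hgreal z₀
  exact main_aux hu2 hgnonneg hPDE hMex hz₁ hz₂ hz₀pos h12
end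

section
/- With notation as in the system above, suppose P_{0,0} is constant and the growth condition holds: w ↦ w^α·w̄^β·P_{α,β}(1/w) extends smoothly at 0. Then P_{1,0} is holomorphic on ℂ and is a polynomial in w of degree at most 1. -/
theorem stmt9 (P : ℕ → ℕ → ℂ → ℂ)
    (hsm : ∀ α β, ContDiff ℝ (⊤ : ℕ∞) (P α β))
    (hconj : ∀ α β w, (starRingEnd ℂ) (P α β w) = P β α w)
    (hgrow : ∀ α β : ℕ, ∃ G : ℂ → ℂ, ContDiff ℝ (⊤ : ℕ∞) G ∧
      ∀ w : ℂ, w ≠ 0 → G w = w ^ α * ((starRingEnd ℂ) w) ^ β * P α β w⁻¹)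
    (hconst : ∃ c : ℂ, ∀ w, P 0 0 w = c)
    (heq : ∀ w, P 1 1 w * wd (wdb (P 0 0)) w = wdb (P 1 0) w * wd (P 0 1) w) :
    Differentiable ℂ (P 1 0) ∧ ∃ a b : ℂ, ∀ w, P 1 0 w = a + b * w := by
  obtain ⟨c, hc⟩ := hconst
  have hP00 : P 0 0 = fun _ => c := funext hc
  -- `wd (wdb (P 0 0)) = 0`
  have hwdb0 : wdb (P 0 0) = fun _ => (0 : ℂ) := by
    funext w
    simp [wdb, hP00, fderiv_const]
  have hwd0 : ∀ w, wd (wdb (P 0 0)) w = 0 := by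
    intro w
    simp [wd, hwdb0, fderiv_const]
  -- relation between `wd (P 0 1)` and `wdb (P 1 0)`
  have hdiff10 : Differentiable ℝ (P 1 0) := (hsm 1 0).differentiable (by simp)
  have hP01 : P 0 1 = fun w => Complex.conjCLE (P 1 0 w) := by
    funext w
    rw [Complex.conjCLE_apply, hconj 1 0 w]
  have hfd : ∀ w, fderiv ℝ (P 0 1) w =
      (Complex.conjCLE : ℂ ≃L[ℝ] ℂ).toContinuousLinearMap.comp (fderiv ℝ (P 1 0) w) := by
    intro w
    rw [hP01]
    exact (Complex.conjCLE : ℂ ≃L[ℝ] ℂ).comp_fderiv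
  have hwdP01 : ∀ w, wd (P 0 1) w = (starRingEnd ℂ) (wdb (P 1 0) w) := by
    intro w
    simp only [wd, wdb, hfd w, ContinuousLinearMap.coe_comp', Function.comp_apply,
      ContinuousLinearEquiv.coe_coe, Complex.conjCLE_apply]
    rw [map_div₀, map_add, map_mul, Complex.conj_I]
    rw [map_ofNat]
    ring
  -- `wdb (P 1 0) = 0`
  have hwdbz : ∀ w, wdb (P 1 0) w = 0 := by
    intro w
    have h := heq w
    rw [hwd0 w, mul_zero, hwdP01 w, Complex.mul_conj] at h
    have := Complex.normSq_eq_zero.mp (by exact_mod_cast h.symm)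
    exact this
  -- holomorphy
  have hf : Differentiable ℂ (P 1 0) := by
    intro w
    set L := fderiv ℝ (P 1 0) w with hL
    have hz : L 1 + Complex.I * L Complex.I = 0 := by
      have := hwdbz w
      simp only [wdb, ← hL] at this
      field_simp at this
      linear_combination this
    have hLI : L Complex.I = Complex.I * L 1 := by
      have h2 : Complex.I * L Complex.I = -L 1 := by linear_combination hz
      have := congrArg (fun x => -Complex.I * x) h2
      simp only [neg_mul, mul_neg, neg_neg, ← mul_assoc, Complex.I_mul_I] at this
      simpa using this
    set L' : ℂ →L[ℂ] ℂ := (L 1) • (ContinuousLinearMap.id ℂ ℂ) with hL'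
    have hrs : L'.restrictScalars ℝ = L := by
      apply ContinuousLinearMap.ext
      intro z
      have hzdec : z = (z.re : ℝ) • (1 : ℂ) + (z.im : ℝ) • Complex.I := by
        simp [Complex.real_smul, Complex.re_add_im]
      have : L z = (z.re : ℝ) • L 1 + (z.im : ℝ) • L Complex.I := by
        conv_lhs => rw [hzdec]
        rw [map_add, map_smul, map_smul]
      rw [ContinuousLinearMap.coe_restrictScalars']
      simp only [hL', ContinuousLinearMap.smul_apply, ContinuousLinearMap.id_apply]
      rw [this, hLI]
      simp only [Complex.real_smul, smul_eq_mul]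
      have : (z.re : ℂ) * L 1 + (z.im : ℂ) * (Complex.I * L 1)
          = ((z.re : ℂ) + (z.im : ℂ) * Complex.I) * L 1 := by ring
      rw [this, Complex.re_add_im, mul_comm]
    exact ⟨L', hasFDerivAt_of_restrictScalars ℝ (hdiff10 w).hasFDerivAt hrs⟩
  refine ⟨hf, ?_⟩
  -- growth condition
  obtain ⟨G, hGsm, hG⟩ := hgrow 1 0
  have hGval : ∀ z : ℂ, z ≠ 0 → P 1 0 z = z * G z⁻¹ := by
    intro z hz
    have h := hG z⁻¹ (inv_ne_zero hz)
    rw [h]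
    field_simp
  set F : ℂ → ℂ := dslope (P 1 0) 0 with hF
  have hFdiff : Differentiable ℂ F := by
    intro z
    rcases eq_or_ne z 0 with rfl | hz
    · obtain ⟨p, hp⟩ := hf.analyticAt 0
      exact hp.has_fpower_series_dslope_fslope.analyticAt.differentiableAt
    · exact (differentiableAt_dslope_of_ne hz).mpr (hf z)
  have hinv : Filter.Tendsto (fun z : ℂ => z⁻¹) (Filter.cocompact ℂ) (nhds 0) := by
    rw [← Metric.cobounded_eq_cocompact]
    exact Filter.tendsto_inv₀_cobounded
  have htend : Filter.Tendsto F (Filter.cocompact ℂ) (nhds (G 0)) := by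
    have h2 : Filter.Tendsto (fun z : ℂ => G z⁻¹ - z⁻¹ * P 1 0 0)
        (Filter.cocompact ℂ) (nhds (G 0)) := by
      have hg : Filter.Tendsto (fun z : ℂ => G z⁻¹) (Filter.cocompact ℂ) (nhds (G 0)) :=
        ((hGsm.continuous.continuousAt (x := (0 : ℂ))).tendsto).comp hinv
      have hm : Filter.Tendsto (fun z : ℂ => z⁻¹ * P 1 0 0) (Filter.cocompact ℂ) (nhds 0) := by
        simpa using hinv.mul (tendsto_const_nhds (x := P 1 0 0))
      simpa using hg.sub hm
    refine h2.congr' ?_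
    filter_upwards [(isCompact_singleton (x := (0 : ℂ))).compl_mem_cocompact] with z hz
    have hz0 : z ≠ 0 := by simpa using hz
    rw [hF, dslope_of_ne _ hz0, slope_def_field]
    rw [hGval z hz0]
    field_simp
    ring
  have hFconst := hFdiff.eq_const_of_tendsto_cocompact htend
  refine ⟨P 1 0 0, G 0, fun w => ?_⟩
  rcases eq_or_ne w 0 with rfl | hw
  · ring
  · have := congrFun hFconst w
    rw [hF, dslope_of_ne _ hw, slope_def_field] at this
    simp only [Function.const_apply] at this
    field_simp at this
    linear_combination this
end
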